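/- Fix α ∈ (0,1), σ_Z ≥ 0 and k > 0 (k represents the fixed ratio τ_Q/σ_β). For β ∈ (0,1) write σ_β = √(β² + (1−β)²) and c(β) = αβ + (1−α)(1−β), and let σ_α = √(α² + (1−α)² + σ_Z²). Then both the mean normalized quality F(β) = (c(β)/(σ_α σ_β))·σ_α·H(k σ_β σ_α / c(β)) and the admitted fraction N(β) = 1 − Φ(k σ_β σ_α / c(β)) are strictly increasing for β ∈ (0,α) and strictly decreasing for β ∈ (α,1); in particular both attain their maximum over (0,1) at β = α. -/

import Mathlib

open MeasureTheory Real Set Filter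

/-- Standard normal pdf. -/
noncomputable def phi (x : ℝ) : ℝ := Real.exp (-x ^ 2 / 2) / Real.sqrt (2 * Real.pi)

/-- Standard normal cdf. -/
noncomputable def Phi (x : ℝ) : ℝ := ∫ y in Set.Iic x, phi y

/-- Standard normal hazard rate. -/
noncomputable def Haz (x : ℝ) : ℝ := phi x / (1 - Phi x)

/-!
Write `q(β) = c(β) / σ_β`. Then `F = q · H(kσ_α / q)` and `N = 1 - Φ(kσ_α / q)`, and both are
strictly increasing functions of `q > 0`: for `N` because `Φ` is, for `F` because `t ↦ H(t) / t`
is strictly decreasing on `(0, ∞)`, which amounts to Mills' inequality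
`t φ(t) < (1 + t²)(1 - Φ(t))`. Finally `q'(β) = (α - β) / σ_β³`, so `q` increases on `β ≤ α`
and decreases on `β ≥ α`.
-/

open ProbabilityTheory Topology

lemma phi_eq_gaussianPDFReal : phi = gaussianPDFReal 0 1 := by
  ext x; simp [phi, gaussianPDFReal, div_eq_inv_mul]

lemma phi_pos (x : ℝ) : 0 < phi x := by unfold phi; positivity

lemma integrable_phi : Integrable phi :=
  phi_eq_gaussianPDFReal ▸ integrable_gaussianPDFReal 0 1

lemma integral_phi : ∫ x, phi x = 1 :=
  phi_eq_gaussianPDFReal ▸ integral_gaussianPDFReal_eq_one 0 one_ne_zero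

lemma hasDerivAt_phi (x : ℝ) : HasDerivAt phi (-x * phi x) x := by
  have hexp : HasDerivAt (fun t : ℝ => -t ^ 2 / 2) (-x) x := by
    refine ((hasDerivAt_pow 2 x).fun_neg.div_const 2).congr_deriv ?_
    norm_num; ring
  refine (hexp.exp.div_const (√(2 * π))).congr_deriv ?_
  simp only [phi]
  ring

lemma one_sub_Phi (x : ℝ) : 1 - Phi x = ∫ y in Ioi x, phi y := by
  rw [← integral_phi, ← intervalIntegral.integral_Iic_add_Ioi (b := x)
    integrable_phi.integrableOn integrable_phi.integrableOn, Phi, add_sub_cancel_left]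

lemma one_sub_Phi_pos (x : ℝ) : 0 < 1 - Phi x := by
  rw [one_sub_Phi, setIntegral_pos_iff_support_of_nonneg_ae
    (.of_forall fun y => (phi_pos y).le) integrable_phi.integrableOn,
    Function.support_eq_univ fun y => (phi_pos y).ne', univ_inter]
  simp

lemma tendsto_one_sub_Phi_atTop : Tendsto (fun x => 1 - Phi x) atTop (𝓝 0) := by
  simpa only [one_sub_Phi, id] using tendsto_integral_Ioi_zero (f := phi) (b := id) tendsto_id

lemma hasDerivAt_Phi (x : ℝ) : HasDerivAt Phi (phi x) x := by
  have hPhi : ∀ y, Phi y = Phi 0 + ∫ t in (0 : ℝ)..y, phi t := fun y => by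
    rw [← intervalIntegral.integral_Iic_sub_Iic integrable_phi.integrableOn
      integrable_phi.integrableOn, Phi, Phi, add_sub_cancel]
  have hcont : Continuous phi := by unfold phi; fun_prop
  rw [show Phi = fun y => Phi 0 + ∫ t in (0 : ℝ)..y, phi t from funext hPhi]
  exact (hcont.integral_hasStrictDerivAt 0 x).hasDerivAt.const_add _

lemma Phi_strictMono : StrictMono Phi :=
  strictMono_of_hasDerivAt_pos hasDerivAt_Phi phi_pos

lemma tendsto_phi_atTop : Tendsto phi atTop (𝓝 0) := by
  have h : Tendsto (fun x : ℝ => -x ^ 2 / 2) atTop atBot :=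
    (tendsto_neg_atBot_iff.2 (tendsto_pow_atTop two_ne_zero)).atBot_div_const two_pos
  show Tendsto (fun x => rexp (-x ^ 2 / 2) / √(2 * π)) atTop (𝓝 0)
  simpa only [zero_div, Function.comp_def] using (tendsto_exp_atBot.comp h).div_const (√(2 * π))

-- Its derivative `-2φ(x) / (1 + x²)²` is negative and it vanishes at `+∞`, so it is positive.
noncomputable def millsGap (x : ℝ) : ℝ := 1 - Phi x - x * phi x / (1 + x ^ 2)

lemma hasDerivAt_millsGap (x : ℝ) :
    HasDerivAt millsGap (-(2 * phi x / (1 + x ^ 2) ^ 2)) x := by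
  have hden : HasDerivAt (fun t : ℝ => 1 + t ^ 2) (2 * x) x := by
    refine ((hasDerivAt_pow 2 x).const_add 1).congr_deriv ?_
    norm_num
  have h := ((hasDerivAt_Phi x).const_sub 1).sub
    (((hasDerivAt_id x).mul (hasDerivAt_phi x)).div hden (by positivity))
  refine h.congr_deriv ?_
  simp only [id, Pi.mul_apply]
  field_simp
  ring

lemma tendsto_millsGap_atTop : Tendsto millsGap atTop (𝓝 0) := by
  have hratio : Tendsto (fun x : ℝ => x * phi x / (1 + x ^ 2)) atTop (𝓝 0) := by
    refine squeeze_zero' ?_ ?_ tendsto_phi_atTop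
    · filter_upwards [eventually_ge_atTop 0] with x hx
      have := phi_pos x
      positivity
    · filter_upwards [eventually_ge_atTop 0] with x hx
      rw [div_le_iff₀ (by positivity)]
      nlinarith [phi_pos x, sq_nonneg (x - 1)]
  rw [← sub_zero 0]
  exact tendsto_one_sub_Phi_atTop.sub hratio

lemma mul_phi_lt_mul_one_sub_Phi (x : ℝ) : x * phi x < (1 + x ^ 2) * (1 - Phi x) := by
  have hanti : StrictAnti millsGap := strictAnti_of_hasDerivAt_neg hasDerivAt_millsGap
    fun x => neg_neg_of_pos (by have := phi_pos x; positivity)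
  have hgap : 0 < millsGap x :=
    (hanti.antitone.le_of_tendsto tendsto_millsGap_atTop (x + 1)).trans_lt
      (hanti (lt_add_one x))
  unfold millsGap at hgap
  rw [sub_pos, div_lt_iff₀ (by positivity)] at hgap
  linarith

lemma Haz_pos (x : ℝ) : 0 < Haz x := div_pos (phi_pos x) (one_sub_Phi_pos x)

lemma mul_Haz_lt (x : ℝ) : x * Haz x < 1 + x ^ 2 := by
  rw [Haz, ← mul_div_assoc, div_lt_iff₀ (one_sub_Phi_pos x)]
  exact mul_phi_lt_mul_one_sub_Phi x

lemma hasDerivAt_Haz (x : ℝ) : HasDerivAt Haz (Haz x * (Haz x - x)) x := by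
  refine ((hasDerivAt_phi x).div ((hasDerivAt_Phi x).const_sub 1)
    (one_sub_Phi_pos x).ne').congr_deriv ?_
  have hne := (one_sub_Phi_pos x).ne'
  simp only [Haz]
  field_simp
  ring

lemma strictAntiOn_Haz_div_self : StrictAntiOn (fun t => Haz t / t) (Ioi 0) := by
  have hderiv : ∀ t ≠ 0, HasDerivAt (fun t => Haz t / t)
      (Haz t * (t * Haz t - (1 + t ^ 2)) / t ^ 2) t := fun t ht =>
    ((hasDerivAt_Haz t).div (hasDerivAt_id t) ht).congr_deriv (by simp only [id]; ring)
  refine strictAntiOn_of_hasDerivWithinAt_neg (convex_Ioi 0)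
    (fun t ht => (hderiv t (ne_of_gt ht)).continuousAt.continuousWithinAt)
    (fun t ht => (hderiv t ?_).hasDerivWithinAt) (fun t ht => ?_)
  all_goals rw [interior_Ioi] at ht
  · exact ne_of_gt ht
  · exact div_neg_of_neg_of_pos
      (mul_neg_of_pos_of_neg (Haz_pos t) (sub_neg.2 (mul_Haz_lt t))) (pow_pos ht 2)

lemma strictMonoOn_mul_Haz_div {a : ℝ} (ha : 0 < a) :
    StrictMonoOn (fun q => q * Haz (a / q)) (Ioi 0) := by
  rintro q₁ (hq₁ : 0 < q₁) q₂ (hq₂ : 0 < q₂) hlt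
  have hG := strictAntiOn_Haz_div_self (div_pos ha hq₂) (div_pos ha hq₁)
    (div_lt_div_of_pos_left ha hq₁ hlt)
  have hrw : ∀ q, 0 < q → q * Haz (a / q) = a * (Haz (a / q) / (a / q)) := fun q hq => by
    field_simp
  simp only [hrw q₁ hq₁, hrw q₂ hq₂]
  exact mul_lt_mul_of_pos_left hG ha

lemma strictMonoOn_one_sub_Phi_div {a : ℝ} (ha : 0 < a) :
    StrictMonoOn (fun q => 1 - Phi (a / q)) (Ioi 0) := fun _ hq₁ _ _ hlt =>
  sub_lt_sub_left (Phi_strictMono (div_lt_div_of_pos_left ha hq₁ hlt)) 1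

/-- The scalar projection of `(α, 1 - α)` onto the direction of `(β, 1 - β)`, i.e. `c(β) / σ_β`. -/
noncomputable def scalarProj (α β : ℝ) : ℝ :=
  (α * β + (1 - α) * (1 - β)) / √(β ^ 2 + (1 - β) ^ 2)

lemma sq_add_one_sub_sq_pos (β : ℝ) : 0 < β ^ 2 + (1 - β) ^ 2 := by
  nlinarith [sq_nonneg (2 * β - 1)]

lemma hasDerivAt_scalarProj (α β : ℝ) :
    HasDerivAt (scalarProj α) ((α - β) / √(β ^ 2 + (1 - β) ^ 2) ^ 3) β := by
  have hs := sq_add_one_sub_sq_pos β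
  have hnum : HasDerivAt (fun b : ℝ => α * b + (1 - α) * (1 - b)) (2 * α - 1) β := by
    refine (((hasDerivAt_id β).const_mul α).add
      (((hasDerivAt_id β).const_sub 1).const_mul (1 - α))).congr_deriv ?_
    ring
  have hnorm : HasDerivAt (fun b : ℝ => b ^ 2 + (1 - b) ^ 2) (4 * β - 2) β := by
    refine ((hasDerivAt_pow 2 β).add (((hasDerivAt_id β).const_sub 1).pow 2)).congr_deriv ?_
    simp only [id]
    ring
  refine (hnum.div (hnorm.sqrt hs.ne') (sqrt_pos.2 hs).ne').congr_deriv ?_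
  field_simp
  rw [sq_sqrt hs.le]
  ring

lemma strictMonoOn_scalarProj (α : ℝ) : StrictMonoOn (scalarProj α) (Iic α) := by
  refine strictMonoOn_of_hasDerivWithinAt_pos (convex_Iic α)
    (fun β _ => (hasDerivAt_scalarProj α β).continuousAt.continuousWithinAt)
    (fun β _ => (hasDerivAt_scalarProj α β).hasDerivWithinAt) (fun β hβ => ?_)
  rw [interior_Iic] at hβ
  exact div_pos (sub_pos.2 hβ) (pow_pos (sqrt_pos.2 (sq_add_one_sub_sq_pos β)) 3)

lemma strictAntiOn_scalarProj (α : ℝ) : StrictAntiOn (scalarProj α) (Ici α) := by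
  refine strictAntiOn_of_hasDerivWithinAt_neg (convex_Ici α)
    (fun β _ => (hasDerivAt_scalarProj α β).continuousAt.continuousWithinAt)
    (fun β _ => (hasDerivAt_scalarProj α β).hasDerivWithinAt) (fun β hβ => ?_)
  rw [interior_Ici] at hβ
  exact div_neg_of_neg_of_pos (sub_neg.2 hβ) (pow_pos (sqrt_pos.2 (sq_add_one_sub_sq_pos β)) 3)

lemma scalarProj_pos {α β : ℝ} (hα : α ∈ Icc 0 1) (hβ : β ∈ Ioo 0 1) : 0 < scalarProj α β := by
  obtain ⟨hα₀, hα₁⟩ := hα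
  obtain ⟨hβ₀, hβ₁⟩ := hβ
  have : 0 < α * β + (1 - α) * (1 - β) := by
    nlinarith [mul_nonneg hα₀ (sq_nonneg β), mul_nonneg (sub_nonneg.2 hα₁) (sq_nonneg (1 - β)),
      mul_pos hβ₀ (sub_pos.2 hβ₁)]
  exact div_pos this (sqrt_pos.2 (sq_add_one_sub_sq_pos β))

lemma comp_scalarProj_unimodal {α : ℝ} (hα : α ∈ Ioo 0 1) {g : ℝ → ℝ}
    (hg : StrictMonoOn g (Ioi 0)) :
    StrictMonoOn (g ∘ scalarProj α) (Ioo 0 α) ∧ StrictAntiOn (g ∘ scalarProj α) (Ioo α 1) ∧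
      ∀ β ∈ Ioo (0 : ℝ) 1, β ≠ α → g (scalarProj α β) < g (scalarProj α α) := by
  have hpos : MapsTo (scalarProj α) (Ioo 0 1) (Ioi 0) := fun β hβ =>
    scalarProj_pos (Ioo_subset_Icc_self hα) hβ
  refine ⟨hg.comp ((strictMonoOn_scalarProj α).mono fun _ h => h.2.le)
      (hpos.mono_left (Ioo_subset_Ioo_right hα.2.le)),
    hg.comp_strictAntiOn ((strictAntiOn_scalarProj α).mono fun _ h => h.1.le)
      (hpos.mono_left (Ioo_subset_Ioo_left hα.1.le)), fun β hβ hne => ?_⟩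
  rcases hne.lt_or_gt with hlt | hgt
  · exact hg (hpos hβ) (hpos hα) (strictMonoOn_scalarProj α hlt.le self_mem_Iic hlt)
  · exact hg (hpos hβ) (hpos hα) (strictAntiOn_scalarProj α self_mem_Ici hgt.le hgt)

theorem stmt9_general (α σZ k : ℝ) (hα : α ∈ Set.Ioo (0 : ℝ) 1) (hk : 0 < k)
    (σα : ℝ) (hσα : σα = Real.sqrt (α ^ 2 + (1 - α) ^ 2 + σZ ^ 2))
    (σβ c F N : ℝ → ℝ)
    (hσβ : ∀ β, σβ β = Real.sqrt (β ^ 2 + (1 - β) ^ 2))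
    (hc : ∀ β, c β = α * β + (1 - α) * (1 - β))
    (hF : ∀ β, F β = c β / (σα * σβ β) * σα * Haz (k * σβ β * σα / c β))
    (hN : ∀ β, N β = 1 - Phi (k * σβ β * σα / c β)) :
    StrictMonoOn F (Set.Ioo 0 α) ∧ StrictAntiOn F (Set.Ioo α 1) ∧
    StrictMonoOn N (Set.Ioo 0 α) ∧ StrictAntiOn N (Set.Ioo α 1) ∧
    (∀ β ∈ Set.Ioo (0 : ℝ) 1, β ≠ α → F β < F α ∧ N β < N α) := by
  have hσα_pos : 0 < σα := by
    rw [hσα]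
    exact sqrt_pos.2 (by nlinarith [sq_nonneg (2 * α - 1), sq_nonneg σZ])
  have hproj : ∀ β, scalarProj α β = c β / σβ β := fun β => by rw [hc, hσβ, scalarProj]
  have harg : ∀ β, k * σβ β * σα / c β = k * σα / scalarProj α β := fun β => by
    rw [hproj, div_div_eq_mul_div]; ring
  have hF' : F = (fun q => q * Haz (k * σα / q)) ∘ scalarProj α := by
    funext β
    rw [hF, harg, Function.comp_apply, mul_comm σα, ← div_div, div_mul_cancel₀ _ hσα_pos.ne',
      ← hproj]
  have hN' : N = (fun q => 1 - Phi (k * σα / q)) ∘ scalarProj α := by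
    funext β
    rw [hN, harg, Function.comp_apply]
  have ha : 0 < k * σα := mul_pos hk hσα_pos
  obtain ⟨hF₁, hF₂, hFα⟩ := comp_scalarProj_unimodal hα (strictMonoOn_mul_Haz_div ha)
  obtain ⟨hN₁, hN₂, hNα⟩ := comp_scalarProj_unimodal hα (strictMonoOn_one_sub_Phi_div ha)
  rw [hF', hN']
  exact ⟨hF₁, hF₂, hN₁, hN₂, fun β hβ hne => ⟨hFα β hβ hne, hNα β hβ hne⟩⟩

theorem stmt9 (α σZ k : ℝ) (hα : α ∈ Set.Ioo (0 : ℝ) 1) (hσZ : 0 ≤ σZ) (hk : 0 < k)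
    (σα : ℝ) (hσα : σα = Real.sqrt (α ^ 2 + (1 - α) ^ 2 + σZ ^ 2))
    (σβ c F N : ℝ → ℝ)
    (hσβ : ∀ β, σβ β = Real.sqrt (β ^ 2 + (1 - β) ^ 2))
    (hc : ∀ β, c β = α * β + (1 - α) * (1 - β))
    (hF : ∀ β, F β = c β / (σα * σβ β) * σα * Haz (k * σβ β * σα / c β))
    (hN : ∀ β, N β = 1 - Phi (k * σβ β * σα / c β)) :
    StrictMonoOn F (Set.Ioo 0 α) ∧ StrictAntiOn F (Set.Ioo α 1) ∧
    StrictMonoOn N (Set.Ioo 0 α) ∧ StrictAntiOn N (Set.Ioo α 1) ∧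
    (∀ β ∈ Set.Ioo (0 : ℝ) 1, β ≠ α → F β < F α ∧ N β < N α) :=
  stmt9_general α σZ k hα hk σα hσα σβ c F N hσβ hc hF hN
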